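/- The trilinear alternating map Ψ(a₁,a₂,a₃) = Alt_{A,D} Tr(D₁(a₁)·D₂(a₂)·a₃) + Alt_A Tr(a₁·Q·a₂·a₃) is a 3-cocycle on the Lie algebra A: for all x₁, x₂, x₃, x₄ ∈ A, Σ_{1 ≤ i < j ≤ 4} (-1)^{i+j} Ψ([x_i,x_j], x₁, …, x̂_i, …, x̂_j, …, x₄) = 0. (This is the lifting/quantization of the standard cocycle by the element Q.) -/
import Mathlib

/-- `Ψ(a₁,a₂,a₃) = Alt_{A,D} Tr(D₁(a₁)·D₂(a₂)·a₃) + Alt_A Tr(a₁·Q·a₂·a₃)`. -/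
noncomputable def PsiLift {A : Type*} [Ring A] [Algebra ℂ A]
    (Tr : A →ₗ[ℂ] ℂ) (D₁ D₂ : A →ₗ[ℂ] A) (Q : A) (a₁ a₂ a₃ : A) : ℂ :=
  (∑ σ : Equiv.Perm (Fin 3), ((Equiv.Perm.sign σ : ℤ) : ℂ) *
    (Tr (D₁ (![a₁, a₂, a₃] (σ 0)) * D₂ (![a₁, a₂, a₃] (σ 1)) * ![a₁, a₂, a₃] (σ 2)) -
     Tr (D₂ (![a₁, a₂, a₃] (σ 0)) * D₁ (![a₁, a₂, a₃] (σ 1)) * ![a₁, a₂, a₃] (σ 2)))) +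
  ∑ σ : Equiv.Perm (Fin 3), ((Equiv.Perm.sign σ : ℤ) : ℂ) *
    Tr (![a₁, a₂, a₃] (σ 0) * Q * ![a₁, a₂, a₃] (σ 1) * ![a₁, a₂, a₃] (σ 2))

lemma psi_expand {A : Type*} [Ring A] [Algebra ℂ A]
    (Tr : A →ₗ[ℂ] ℂ) (D₁ D₂ : A →ₗ[ℂ] A) (Q : A) (a b c : A) :
    PsiLift Tr D₁ D₂ Q a b c =
      (Tr (D₁ a * D₂ b * c) - Tr (D₂ a * D₁ b * c))
    - (Tr (D₁ b * D₂ a * c) - Tr (D₂ b * D₁ a * c))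
    - (Tr (D₁ c * D₂ b * a) - Tr (D₂ c * D₁ b * a))
    - (Tr (D₁ a * D₂ c * b) - Tr (D₂ a * D₁ c * b))
    + (Tr (D₁ b * D₂ c * a) - Tr (D₂ b * D₁ c * a))
    + (Tr (D₁ c * D₂ a * b) - Tr (D₂ c * D₁ a * b))
    + Tr (a * Q * b * c) - Tr (b * Q * a * c) - Tr (c * Q * b * a)
    - Tr (a * Q * c * b) + Tr (b * Q * c * a) + Tr (c * Q * a * b) := by
  have huniv : (Finset.univ : Finset (Equiv.Perm (Fin 3))) =
    {Equiv.refl _, Equiv.swap 0 1, Equiv.swap 0 2, Equiv.swap 1 2,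
     Equiv.swap 0 1 * Equiv.swap 1 2, Equiv.swap 1 2 * Equiv.swap 0 1} := by decide
  rw [PsiLift, huniv]
  simp (config := { decide := true }) [Finset.sum_insert, Finset.mem_insert, Equiv.swap_apply_def,
    Equiv.Perm.sign_swap, Fin.isValue]
  ring

set_option maxHeartbeats 4000000 in
theorem stmt_9 {A : Type*} [Ring A] [Algebra ℂ A]
    (Tr : A →ₗ[ℂ] ℂ) (hTr : ∀ x y : A, Tr (x * y) = Tr (y * x))
    (D₁ D₂ : A →ₗ[ℂ] A)
    (hD₁ : ∀ x y : A, D₁ (x * y) = D₁ x * y + x * D₁ y)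
    (hD₂ : ∀ x y : A, D₂ (x * y) = D₂ x * y + x * D₂ y)
    (hTD₁ : ∀ a : A, Tr (D₁ a) = 0) (hTD₂ : ∀ a : A, Tr (D₂ a) = 0)
    (Q : A) (hQ : ∀ a : A, D₁ (D₂ a) - D₂ (D₁ a) = Q * a - a * Q) :
    ∀ x₁ x₂ x₃ x₄ : A,
      - PsiLift Tr D₁ D₂ Q (x₁ * x₂ - x₂ * x₁) x₃ x₄
      + PsiLift Tr D₁ D₂ Q (x₁ * x₃ - x₃ * x₁) x₂ x₄
      - PsiLift Tr D₁ D₂ Q (x₁ * x₄ - x₄ * x₁) x₂ x₃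
      - PsiLift Tr D₁ D₂ Q (x₂ * x₃ - x₃ * x₂) x₁ x₄
      + PsiLift Tr D₁ D₂ Q (x₂ * x₄ - x₄ * x₂) x₁ x₃
      - PsiLift Tr D₁ D₂ Q (x₃ * x₄ - x₄ * x₃) x₁ x₂ = 0 := by
  intro x₁ x₂ x₃ x₄
  have cyc4 : ∀ a b c d : A, Tr (a * (b * (c * d))) = Tr (b * (c * (d * a))) := by
    intro a b c d; rw [hTr, mul_assoc, mul_assoc]
  have cyc5 : ∀ a b c d e : A,
      Tr (a * (b * (c * (d * e)))) = Tr (b * (c * (d * (e * a)))) := by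
    intro a b c d e; rw [hTr, mul_assoc, mul_assoc, mul_assoc]
  have der1 : ∀ a b c d : A, Tr (D₁ a * (b * (c * d))) + Tr (a * (D₁ b * (c * d)))
      + Tr (a * (b * (D₁ c * d))) + Tr (a * (b * (c * D₁ d))) = 0 := by
    intro a b c d
    have h := hTD₁ (a * (b * (c * d)))
    simp only [hD₁, mul_add, map_add] at h
    linear_combination h
  have der2 : ∀ a b c d : A, Tr (D₂ a * (b * (c * d))) + Tr (a * (D₂ b * (c * d)))
      + Tr (a * (b * (D₂ c * d))) + Tr (a * (b * (c * D₂ d))) = 0 := by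
    intro a b c d
    have h := hTD₂ (a * (b * (c * d)))
    simp only [hD₂, mul_add, map_add] at h
    linear_combination h
  have qrel : ∀ a b c d : A, Tr (D₁ (D₂ a) * (b * (c * d))) - Tr (D₂ (D₁ a) * (b * (c * d)))
      = Tr (Q * (a * (b * (c * d)))) - Tr (a * (Q * (b * (c * d)))) := by
    intro a b c d
    have h := congrArg (fun z => Tr (z * (b * (c * d)))) (hQ a)
    simp only [sub_mul, map_sub, mul_assoc] at h
    linear_combination h
  simp only [psi_expand, map_sub, hD₁, hD₂, map_add, sub_mul, mul_sub, add_mul, mul_add,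
    mul_assoc]
  linear_combination (der1 (D₂ x₁) x₂ x₃ x₄) +
      (-1 : ℂ) * (der1 (D₂ x₁) x₂ x₄ x₃) +
      (der1 (D₂ x₁) x₃ x₄ x₂) +
      (der1 x₂ x₃ (D₂ x₁) x₄) +
      (-2 : ℂ) * (der1 x₂ x₃ x₄ (D₂ x₁)) +
      (-1 : ℂ) * (der1 x₂ x₄ (D₂ x₁) x₃) +
      (der1 x₂ x₄ x₃ (D₂ x₁)) +
      (der1 x₃ (D₂ x₁) x₂ x₄) +
      (-1 : ℂ) * (der1 x₃ (D₂ x₁) x₄ x₂) +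
      (der1 x₃ x₄ (D₂ x₁) x₂) +
      (-1 : ℂ) * (der1 x₃ x₄ x₂ (D₂ x₁)) +
      (-1 : ℂ) * (der1 x₄ (D₂ x₁) x₂ x₃) +
      (der1 x₄ (D₂ x₁) x₃ x₂) +
      (-1 : ℂ) * (der1 (D₂ x₂) x₁ x₃ x₄) +
      (der1 (D₂ x₂) x₁ x₄ x₃) +
      (-1 : ℂ) * (der1 (D₂ x₂) x₃ x₄ x₁) +
      (-1 : ℂ) * (der1 x₁ x₃ (D₂ x₂) x₄) +
      (2 : ℂ) * (der1 x₁ x₃ x₄ (D₂ x₂)) +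
      (der1 x₁ x₄ (D₂ x₂) x₃) +
      (-1 : ℂ) * (der1 x₁ x₄ x₃ (D₂ x₂)) +
      (-1 : ℂ) * (der1 x₃ (D₂ x₂) x₁ x₄) +
      (der1 x₃ (D₂ x₂) x₄ x₁) +
      (-1 : ℂ) * (der1 x₃ x₄ (D₂ x₂) x₁) +
      (der1 x₃ x₄ x₁ (D₂ x₂)) +
      (der1 x₄ (D₂ x₂) x₁ x₃) +
      (-1 : ℂ) * (der1 x₄ (D₂ x₂) x₃ x₁) +
      (2 : ℂ) * (der1 (D₂ x₃) x₁ x₂ x₄) +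
      (-1 : ℂ) * (der1 (D₂ x₃) x₁ x₄ x₂) +
      (der1 (D₂ x₃) x₂ x₄ x₁) +
      (-1 : ℂ) * (der1 x₁ (D₂ x₃) x₂ x₄) +
      (der1 x₁ (D₂ x₃) x₄ x₂) +
      (-2 : ℂ) * (der1 x₁ x₂ x₄ (D₂ x₃)) +
      (-1 : ℂ) * (der1 x₁ x₄ (D₂ x₃) x₂) +
      (der1 x₁ x₄ x₂ (D₂ x₃)) +
      (der1 x₂ (D₂ x₃) x₁ x₄) +
      (-1 : ℂ) * (der1 x₂ (D₂ x₃) x₄ x₁) +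
      (der1 x₂ x₄ (D₂ x₃) x₁) +
      (-1 : ℂ) * (der1 x₂ x₄ x₁ (D₂ x₃)) +
      (-1 : ℂ) * (der1 x₄ (D₂ x₃) x₁ x₂) +
      (der1 x₄ (D₂ x₃) x₂ x₁) +
      (-2 : ℂ) * (der1 (D₂ x₄) x₁ x₂ x₃) +
      (der1 (D₂ x₄) x₁ x₃ x₂) +
      (-1 : ℂ) * (der1 (D₂ x₄) x₂ x₃ x₁) +
      (der1 x₁ (D₂ x₄) x₂ x₃) +
      (-1 : ℂ) * (der1 x₁ (D₂ x₄) x₃ x₂) +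
      (2 : ℂ) * (der1 x₁ x₂ x₃ (D₂ x₄)) +
      (der1 x₁ x₃ (D₂ x₄) x₂) +
      (-1 : ℂ) * (der1 x₁ x₃ x₂ (D₂ x₄)) +
      (-1 : ℂ) * (der1 x₂ (D₂ x₄) x₁ x₃) +
      (der1 x₂ (D₂ x₄) x₃ x₁) +
      (-1 : ℂ) * (der1 x₂ x₃ (D₂ x₄) x₁) +
      (der1 x₂ x₃ x₁ (D₂ x₄)) +
      (der1 x₃ (D₂ x₄) x₁ x₂) +
      (-1 : ℂ) * (der1 x₃ (D₂ x₄) x₂ x₁) +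
      (der2 (D₁ x₁) x₂ x₃ x₄) +
      (-1 : ℂ) * (der2 (D₁ x₁) x₂ x₄ x₃) +
      (-1 : ℂ) * (der2 (D₁ x₂) x₁ x₃ x₄) +
      (der2 (D₁ x₂) x₁ x₄ x₃) +
      (-1 : ℂ) * (der2 (D₁ x₃) x₁ x₄ x₂) +
      (der2 (D₁ x₃) x₂ x₄ x₁) +
      (der2 (D₁ x₃) x₄ x₁ x₂) +
      (-1 : ℂ) * (der2 (D₁ x₃) x₄ x₂ x₁) +
      (der2 (D₁ x₄) x₁ x₃ x₂) +
      (-1 : ℂ) * (der2 (D₁ x₄) x₂ x₃ x₁) +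
      (-1 : ℂ) * (der2 (D₁ x₄) x₃ x₁ x₂) +
      (der2 (D₁ x₄) x₃ x₂ x₁) +
      (qrel x₁ x₂ x₃ x₄) +
      (-1 : ℂ) * (qrel x₁ x₂ x₄ x₃) +
      (-1 : ℂ) * (qrel x₂ x₁ x₃ x₄) +
      (qrel x₂ x₁ x₄ x₃) +
      (-1 : ℂ) * (qrel x₃ x₁ x₄ x₂) +
      (qrel x₃ x₂ x₄ x₁) +
      (qrel x₃ x₄ x₁ x₂) +
      (-1 : ℂ) * (qrel x₃ x₄ x₂ x₁) +
      (qrel x₄ x₁ x₃ x₂) +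
      (-1 : ℂ) * (qrel x₄ x₂ x₃ x₁) +
      (-1 : ℂ) * (qrel x₄ x₃ x₁ x₂) +
      (qrel x₄ x₃ x₂ x₁) +
      (-1 : ℂ) * (cyc4 (D₁ x₁) (D₂ x₂) x₃ x₄) +
      (cyc4 (D₁ x₁) (D₂ x₃) x₂ x₄) +
      (-1 : ℂ) * (cyc4 (D₁ x₁) (D₂ x₄) x₂ x₃) +
      (-1 : ℂ) * (cyc4 (D₁ x₁) x₂ (D₂ x₃) x₄) +
      (cyc4 (D₁ x₁) x₂ (D₂ x₄) x₃) +
      (-1 : ℂ) * (cyc4 (D₁ x₁) x₂ x₃ (D₂ x₄)) +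
      (cyc4 (D₁ x₁) x₂ x₄ (D₂ x₃)) +
      (cyc4 (D₁ x₁) x₃ (D₂ x₂) x₄) +
      (-1 : ℂ) * (cyc4 (D₁ x₁) x₃ (D₂ x₄) x₂) +
      (-1 : ℂ) * (cyc4 (D₁ x₁) x₃ x₄ (D₂ x₂)) +
      (-1 : ℂ) * (cyc4 (D₁ x₁) x₄ (D₂ x₂) x₃) +
      (cyc4 (D₁ x₁) x₄ (D₂ x₃) x₂) +
      (cyc4 (D₁ x₂) (D₂ x₁) x₃ x₄) +
      (-1 : ℂ) * (cyc4 (D₁ x₂) (D₂ x₃) x₁ x₄) +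
      (cyc4 (D₁ x₂) (D₂ x₄) x₁ x₃) +
      (cyc4 (D₁ x₂) x₁ (D₂ x₃) x₄) +
      (-1 : ℂ) * (cyc4 (D₁ x₂) x₁ (D₂ x₄) x₃) +
      (cyc4 (D₁ x₂) x₁ x₃ (D₂ x₄)) +
      (-1 : ℂ) * (cyc4 (D₁ x₂) x₁ x₄ (D₂ x₃)) +
      (-1 : ℂ) * (cyc4 (D₁ x₂) x₃ (D₂ x₁) x₄) +
      (cyc4 (D₁ x₂) x₃ (D₂ x₄) x₁) +
      (cyc4 (D₁ x₂) x₃ x₄ (D₂ x₁)) +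
      (cyc4 (D₁ x₂) x₄ (D₂ x₁) x₃) +
      (-1 : ℂ) * (cyc4 (D₁ x₂) x₄ (D₂ x₃) x₁) +
      (-1 : ℂ) * (cyc4 (D₁ x₃) (D₂ x₁) x₂ x₄) +
      (cyc4 (D₁ x₃) (D₂ x₂) x₁ x₄) +
      (-2 : ℂ) * (cyc4 (D₁ x₃) (D₂ x₄) x₁ x₂) +
      (cyc4 (D₁ x₃) x₁ (D₂ x₄) x₂) +
      (cyc4 (D₁ x₃) x₁ x₄ (D₂ x₂)) +
      (-1 : ℂ) * (cyc4 (D₁ x₃) x₂ (D₂ x₄) x₁) +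
      (-1 : ℂ) * (cyc4 (D₁ x₃) x₂ x₄ (D₂ x₁)) +
      (-1 : ℂ) * (cyc4 (D₁ x₃) x₄ (D₂ x₁) x₂) +
      (cyc4 (D₁ x₃) x₄ (D₂ x₂) x₁) +
      (cyc4 (D₁ x₄) (D₂ x₁) x₂ x₃) +
      (-1 : ℂ) * (cyc4 (D₁ x₄) (D₂ x₂) x₁ x₃) +
      (2 : ℂ) * (cyc4 (D₁ x₄) (D₂ x₃) x₁ x₂) +
      (-1 : ℂ) * (cyc4 (D₁ x₄) x₁ (D₂ x₃) x₂) +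
      (-1 : ℂ) * (cyc4 (D₁ x₄) x₁ x₃ (D₂ x₂)) +
      (cyc4 (D₁ x₄) x₂ (D₂ x₃) x₁) +
      (cyc4 (D₁ x₄) x₂ x₃ (D₂ x₁)) +
      (cyc4 (D₁ x₄) x₃ (D₂ x₁) x₂) +
      (-1 : ℂ) * (cyc4 (D₁ x₄) x₃ (D₂ x₂) x₁) +
      (-2 : ℂ) * (cyc4 (D₁ (D₂ x₁)) x₂ x₃ x₄) +
      (cyc4 (D₁ (D₂ x₁)) x₂ x₄ x₃) +
      (-1 : ℂ) * (cyc4 (D₁ (D₂ x₁)) x₃ x₄ x₂) +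
      (2 : ℂ) * (cyc4 (D₁ (D₂ x₂)) x₁ x₃ x₄) +
      (-1 : ℂ) * (cyc4 (D₁ (D₂ x₂)) x₁ x₄ x₃) +
      (cyc4 (D₁ (D₂ x₂)) x₃ x₄ x₁) +
      (-2 : ℂ) * (cyc4 (D₁ (D₂ x₃)) x₁ x₂ x₄) +
      (cyc4 (D₁ (D₂ x₃)) x₁ x₄ x₂) +
      (-1 : ℂ) * (cyc4 (D₁ (D₂ x₃)) x₂ x₄ x₁) +
      (2 : ℂ) * (cyc4 (D₁ (D₂ x₄)) x₁ x₂ x₃) +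
      (-1 : ℂ) * (cyc4 (D₁ (D₂ x₄)) x₁ x₃ x₂) +
      (cyc4 (D₁ (D₂ x₄)) x₂ x₃ x₁) +
      (-1 : ℂ) * (cyc4 (D₂ x₁) (D₁ x₂) x₃ x₄) +
      (cyc4 (D₂ x₁) (D₁ x₂) x₄ x₃) +
      (-2 : ℂ) * (cyc4 (D₂ x₁) (D₁ x₃) x₄ x₂) +
      (cyc4 (D₂ x₁) (D₁ x₄) x₃ x₂) +
      (-1 : ℂ) * (cyc4 (D₂ x₁) x₂ (D₁ x₃) x₄) +
      (cyc4 (D₂ x₁) x₂ (D₁ x₄) x₃) +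
      (-1 : ℂ) * (cyc4 (D₂ x₁) x₃ (D₁ x₄) x₂) +
      (cyc4 (D₂ x₂) (D₁ x₁) x₃ x₄) +
      (-1 : ℂ) * (cyc4 (D₂ x₂) (D₁ x₁) x₄ x₃) +
      (2 : ℂ) * (cyc4 (D₂ x₂) (D₁ x₃) x₄ x₁) +
      (-1 : ℂ) * (cyc4 (D₂ x₂) (D₁ x₄) x₃ x₁) +
      (cyc4 (D₂ x₂) x₁ (D₁ x₃) x₄) +
      (-1 : ℂ) * (cyc4 (D₂ x₂) x₁ (D₁ x₄) x₃) +
      (cyc4 (D₂ x₂) x₃ (D₁ x₄) x₁) +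
      (-2 : ℂ) * (cyc4 (D₂ x₃) (D₁ x₁) x₂ x₄) +
      (cyc4 (D₂ x₃) (D₁ x₁) x₄ x₂) +
      (-1 : ℂ) * (cyc4 (D₂ x₃) (D₁ x₂) x₄ x₁) +
      (-2 : ℂ) * (cyc4 (D₂ x₃) x₁ (D₁ x₂) x₄) +
      (cyc4 (D₂ x₃) x₁ (D₁ x₄) x₂) +
      (-1 : ℂ) * (cyc4 (D₂ x₃) x₂ (D₁ x₄) x₁) +
      (2 : ℂ) * (cyc4 (D₂ x₄) (D₁ x₁) x₂ x₃) +
      (-1 : ℂ) * (cyc4 (D₂ x₄) (D₁ x₁) x₃ x₂) +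
      (cyc4 (D₂ x₄) (D₁ x₂) x₃ x₁) +
      (2 : ℂ) * (cyc4 (D₂ x₄) x₁ (D₁ x₂) x₃) +
      (-1 : ℂ) * (cyc4 (D₂ x₄) x₁ (D₁ x₃) x₂) +
      (cyc4 (D₂ x₄) x₂ (D₁ x₃) x₁) +
      (cyc5 Q x₁ x₂ x₃ x₄) +
      (-1 : ℂ) * (cyc5 Q x₁ x₂ x₄ x₃) +
      (cyc5 Q x₁ x₃ x₄ x₂) +
      (-1 : ℂ) * (cyc5 Q x₂ x₁ x₃ x₄) +
      (cyc5 Q x₂ x₁ x₄ x₃) +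
      (-1 : ℂ) * (cyc5 Q x₂ x₃ x₄ x₁) +
      (-1 : ℂ) * (cyc5 Q x₃ x₁ x₄ x₂) +
      (cyc5 Q x₃ x₂ x₄ x₁) +
      (-1 : ℂ) * (cyc4 x₁ (D₁ x₂) (D₂ x₃) x₄) +
      (cyc4 x₁ (D₁ x₂) (D₂ x₄) x₃) +
      (2 : ℂ) * (cyc4 x₁ (D₁ x₃) (D₂ x₂) x₄) +
      (-2 : ℂ) * (cyc4 x₁ (D₁ x₃) (D₂ x₄) x₂) +
      (-1 : ℂ) * (cyc4 x₁ (D₁ x₃) x₄ (D₂ x₂)) +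
      (-2 : ℂ) * (cyc4 x₁ (D₁ x₄) (D₂ x₂) x₃) +
      (2 : ℂ) * (cyc4 x₁ (D₁ x₄) (D₂ x₃) x₂) +
      (cyc4 x₁ (D₁ (D₂ x₃)) x₂ x₄) +
      (-1 : ℂ) * (cyc4 x₁ (D₁ (D₂ x₃)) x₄ x₂) +
      (-1 : ℂ) * (cyc4 x₁ (D₁ (D₂ x₄)) x₂ x₃) +
      (cyc4 x₁ (D₁ (D₂ x₄)) x₃ x₂) +
      (cyc4 x₁ (D₂ x₂) (D₁ x₃) x₄) +
      (-1 : ℂ) * (cyc4 x₁ (D₂ x₂) (D₁ x₄) x₃) +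
      (-1 : ℂ) * (cyc5 x₁ Q x₂ x₃ x₄) +
      (cyc5 x₁ Q x₃ x₄ x₂) +
      (cyc5 x₁ Q x₄ x₂ x₃) +
      (-1 : ℂ) * (cyc5 x₁ Q x₄ x₃ x₂) +
      (-2 : ℂ) * (cyc4 x₁ x₂ (D₁ x₃) (D₂ x₄)) +
      (2 : ℂ) * (cyc4 x₁ x₂ (D₁ x₄) (D₂ x₃)) +
      (-1 : ℂ) * (cyc5 x₁ x₂ Q x₃ x₄) +
      (cyc5 x₁ x₂ Q x₄ x₃) +
      (cyc5 x₁ x₂ x₃ x₄ Q) +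
      (-1 : ℂ) * (cyc5 x₁ x₂ x₄ x₃ Q) +
      (cyc4 x₁ x₃ (D₁ x₂) (D₂ x₄)) +
      (-2 : ℂ) * (cyc4 x₁ x₃ (D₁ x₄) (D₂ x₂)) +
      (cyc4 x₁ x₃ (D₁ (D₂ x₂)) x₄) +
      (-1 : ℂ) * (cyc4 x₁ x₃ (D₁ (D₂ x₄)) x₂) +
      (cyc5 x₁ x₃ Q x₂ x₄) +
      (-1 : ℂ) * (cyc5 x₁ x₃ Q x₄ x₂) +
      (-1 : ℂ) * (cyc5 x₁ x₃ x₄ Q x₂) +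
      (cyc5 x₁ x₃ x₄ x₂ Q) +
      (-1 : ℂ) * (cyc4 x₁ x₄ (D₁ x₂) (D₂ x₃)) +
      (cyc4 x₁ x₄ (D₁ x₃) (D₂ x₂)) +
      (-1 : ℂ) * (cyc4 x₁ x₄ (D₁ (D₂ x₂)) x₃) +
      (cyc4 x₁ x₄ (D₁ (D₂ x₃)) x₂) +
      (-1 : ℂ) * (cyc5 x₁ x₄ Q x₂ x₃) +
      (cyc5 x₁ x₄ Q x₃ x₂) +
      (-1 : ℂ) * (cyc5 x₁ x₄ x₂ Q x₃) +
      (cyc5 x₁ x₄ x₃ Q x₂) +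
      (cyc4 x₂ (D₁ x₁) (D₂ x₃) x₄) +
      (-1 : ℂ) * (cyc4 x₂ (D₁ x₁) (D₂ x₄) x₃) +
      (-2 : ℂ) * (cyc4 x₂ (D₁ x₃) (D₂ x₁) x₄) +
      (cyc4 x₂ (D₁ x₃) x₄ (D₂ x₁)) +
      (2 : ℂ) * (cyc4 x₂ (D₁ x₄) (D₂ x₁) x₃) +
      (-1 : ℂ) * (cyc4 x₂ (D₁ (D₂ x₃)) x₁ x₄) +
      (cyc4 x₂ (D₁ (D₂ x₃)) x₄ x₁) +
      (cyc4 x₂ (D₁ (D₂ x₄)) x₁ x₃) +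
      (-1 : ℂ) * (cyc4 x₂ (D₁ (D₂ x₄)) x₃ x₁) +
      (-1 : ℂ) * (cyc4 x₂ (D₂ x₁) (D₁ x₃) x₄) +
      (cyc4 x₂ (D₂ x₁) (D₁ x₄) x₃) +
      (cyc5 x₂ Q x₁ x₃ x₄) +
      (-1 : ℂ) * (cyc5 x₂ Q x₃ x₄ x₁) +
      (-1 : ℂ) * (cyc5 x₂ Q x₄ x₁ x₃) +
      (cyc5 x₂ Q x₄ x₃ x₁) +
      (cyc5 x₂ x₁ Q x₃ x₄) +
      (-1 : ℂ) * (cyc5 x₂ x₁ Q x₄ x₃) +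
      (-1 : ℂ) * (cyc5 x₂ x₁ x₃ x₄ Q) +
      (cyc5 x₂ x₁ x₄ x₃ Q) +
      (-1 : ℂ) * (cyc4 x₂ x₃ (D₁ x₁) (D₂ x₄)) +
      (2 : ℂ) * (cyc4 x₂ x₃ (D₁ x₄) (D₂ x₁)) +
      (-1 : ℂ) * (cyc4 x₂ x₃ (D₁ (D₂ x₁)) x₄) +
      (cyc4 x₂ x₃ (D₁ (D₂ x₄)) x₁) +
      (-1 : ℂ) * (cyc5 x₂ x₃ Q x₁ x₄) +
      (cyc5 x₂ x₃ Q x₄ x₁) +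
      (cyc5 x₂ x₃ x₄ Q x₁) +
      (-1 : ℂ) * (cyc5 x₂ x₃ x₄ x₁ Q) +
      (cyc4 x₂ x₄ (D₁ x₁) (D₂ x₃)) +
      (-1 : ℂ) * (cyc4 x₂ x₄ (D₁ x₃) (D₂ x₁)) +
      (cyc4 x₂ x₄ (D₁ (D₂ x₁)) x₃) +
      (-1 : ℂ) * (cyc4 x₂ x₄ (D₁ (D₂ x₃)) x₁) +
      (cyc5 x₂ x₄ Q x₁ x₃) +
      (-1 : ℂ) * (cyc5 x₂ x₄ Q x₃ x₁) +
      (cyc5 x₂ x₄ x₁ Q x₃) +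
      (-1 : ℂ) * (cyc5 x₂ x₄ x₃ Q x₁) +
      (-1 : ℂ) * (cyc4 x₃ (D₁ x₁) (D₂ x₂) x₄) +
      (cyc4 x₃ (D₁ x₂) (D₂ x₁) x₄) +
      (-1 : ℂ) * (cyc4 x₃ (D₁ (D₂ x₁)) x₂ x₄) +
      (cyc4 x₃ (D₁ (D₂ x₂)) x₁ x₄) +
      (-1 : ℂ) * (cyc5 x₃ x₁ Q x₂ x₄) +
      (cyc5 x₃ x₁ Q x₄ x₂) +
      (-1 : ℂ) * (cyc5 x₃ x₁ x₄ x₂ Q) +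
      (cyc5 x₃ x₂ Q x₁ x₄) +
      (-1 : ℂ) * (cyc5 x₃ x₂ Q x₄ x₁) +
      (cyc5 x₃ x₂ x₄ x₁ Q) +
      (-1 : ℂ) * (cyc4 x₃ x₄ (D₁ x₁) (D₂ x₂)) +
      (cyc4 x₃ x₄ (D₁ x₂) (D₂ x₁)) +
      (-1 : ℂ) * (cyc4 x₃ x₄ (D₁ (D₂ x₁)) x₂) +
      (cyc4 x₃ x₄ (D₁ (D₂ x₂)) x₁) +
      (-1 : ℂ) * (cyc5 x₃ x₄ x₁ Q x₂) +
      (cyc5 x₃ x₄ x₂ Q x₁)
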